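/- Let α₁, …, α₅ ∈ ℂ. There exist polynomials P₁, P₂, P₃ ∈ ℂ[X, Y, Z] (depending only on α₁,…,α₅) such that for every solution (x, y, z) of the modified reduced three-wave interaction system (2) on a connected open set U ⊆ ℂ with x nonvanishing, the functions x₂ = 1/x, y₂ = −(y + √−1·x + α₃)x, z₂ = (z + α₄)x satisfy dx₂/dt = P₁(x₂, y₂, z₂), dy₂/dt = P₂(x₂, y₂, z₂), dz₂/dt = P₃(x₂, y₂, z₂) on U. -/

import Mathlib

open Complex

noncomputable section

/-- A solution of the modified reduced three-wave interaction dynamical system (2)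
on a set `U ⊆ ℂ`, with parameters `α₁, …, α₅ : ℂ`. -/
def solMTWI (α₁ α₂ α₃ α₄ α₅ : ℂ) (x y z : ℂ → ℂ) (U : Set ℂ) : Prop :=
  ∀ t ∈ U,
    HasDerivAt x
      (-2 * (y t) ^ 2 - (α₁ + α₃ - 2 * α₅) * y t + z t
        + (α₂ + α₄ + 2 * (α₁ + α₃) * α₅) / 2) t ∧
    HasDerivAt y
      (2 * x t * y t - 2 * α₅ * x t + I * (α₁ - α₃) * y t
        - I * (α₂ - α₄ + 2 * (α₁ - α₃) * α₅) / 2) t ∧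
    HasDerivAt z
      (-2 * x t * z t - (α₂ + α₄) * x t + I * (α₂ - α₄) * y t
        - I * (α₁ - α₃) * z t + I * (α₂ * α₃ - α₁ * α₄)) t

/-!
In the chart `U₂` the old coordinates are recovered as `x = 1/x₂`, `y = -x₂ y₂ - I/x₂ - α₃`,
`z = x₂ z₂ - α₄`. Differentiating the chart map along a solution and substituting these expressions,
every negative power of `x₂` cancels (using `I ^ 2 = -1`), so the transformed vector field is polynomial.
-/

open MvPolynomial

namespace MTWI

section Chain

variable {x y z : ℂ → ℂ} {x' y' z' t : ℂ}

theorem hasDerivAt_one_div (hx : HasDerivAt x x' t) (h₀ : x t ≠ 0) :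
    HasDerivAt (fun s => 1 / x s) (-x' / x t ^ 2) t := by
  simpa only [one_div] using hx.fun_inv h₀

theorem hasDerivAt_chartU₂_y (α₃ : ℂ) (hx : HasDerivAt x x' t) (hy : HasDerivAt y y' t) :
    HasDerivAt (fun s => -(y s + I * x s + α₃) * x s)
      (-(y' + I * x') * x t - (y t + I * x t + α₃) * x') t :=
  (((hy.fun_add (hx.const_mul I)).add_const α₃).fun_neg.fun_mul hx).congr_deriv (by ring)

theorem hasDerivAt_chartU₂_z (α₄ : ℂ) (hx : HasDerivAt x x' t) (hz : HasDerivAt z z' t) :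
    HasDerivAt (fun s => (z s + α₄) * x s) (z' * x t + (z t + α₄) * x') t :=
  (hz.add_const α₄).mul hx

end Chain

variable (α₁ α₂ α₃ α₄ α₅ : ℂ)

def rhsX (y z : ℂ) : ℂ :=
  -2 * y ^ 2 - (α₁ + α₃ - 2 * α₅) * y + z + (α₂ + α₄ + 2 * (α₁ + α₃) * α₅) / 2

def rhsY (x y : ℂ) : ℂ :=
  2 * x * y - 2 * α₅ * x + I * (α₁ - α₃) * y - I * (α₂ - α₄ + 2 * (α₁ - α₃) * α₅) / 2

def rhsZ (x y z : ℂ) : ℂ :=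
  -2 * x * z - (α₂ + α₄) * x + I * (α₂ - α₄) * y - I * (α₁ - α₃) * z + I * (α₂ * α₃ - α₁ * α₄)

def chartU₂ (x y z : ℂ) : Fin 3 → ℂ :=
  ![1 / x, -(y + I * x + α₃) * x, (z + α₄) * x]

def fieldU₂X : MvPolynomial (Fin 3) ℂ :=
  -2 + C (I * (2 * α₅ + 3 * α₃ - α₁)) * X 0
    + C ((α₄ - α₂) / 2 + (α₃ - α₁) * (α₅ + α₃)) * X 0 ^ 2
    + C (4 * I) * X 0 ^ 2 * X 1 + C (2 * α₅ + 3 * α₃ - α₁) * X 0 ^ 3 * X 1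
    - X 0 ^ 3 * X 2 + 2 * X 0 ^ 4 * X 1 ^ 2

def fieldU₂Y : MvPolynomial (Fin 3) ℂ :=
  C (I * (α₁ - α₃)) * X 1 - C I * X 2
    - C ((α₄ - α₂) / 2 + (α₃ - α₁) * (α₅ + α₃)) * X 0 * X 1
    - C (2 * I) * X 0 * X 1 ^ 2 - C (2 * α₅ + 3 * α₃ - α₁) * X 0 ^ 2 * X 1 ^ 2
    + X 0 ^ 2 * X 1 * X 2 - 2 * X 0 ^ 3 * X 1 ^ 3

def fieldU₂Z : MvPolynomial (Fin 3) ℂ :=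
  C (I * (α₄ - α₂)) * X 1 - C (2 * I * (α₅ + α₃)) * X 2
    - C ((α₄ - α₂) / 2 + (α₃ - α₁) * (α₅ + α₃)) * X 0 * X 2
    - C (4 * I) * X 0 * X 1 * X 2 - C (2 * α₅ + 3 * α₃ - α₁) * X 0 ^ 2 * X 1 * X 2
    + X 0 ^ 2 * X 2 ^ 2 - 2 * X 0 ^ 3 * X 1 ^ 2 * X 2

variable {x y z : ℂ}

theorem eval_fieldU₂X (hx : x ≠ 0) :
    eval (chartU₂ α₃ α₄ x y z) (fieldU₂X α₁ α₂ α₃ α₄ α₅) = -rhsX α₁ α₂ α₃ α₄ α₅ y z / x ^ 2 := by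
  simp only [fieldU₂X, chartU₂, rhsX, map_add, map_sub, map_mul, map_pow, map_neg, eval_C, eval_X,
    eval_ofNat, Matrix.cons_val]
  field_simp
  ring_nf
  simp only [I_sq]
  ring

theorem eval_fieldU₂Y (hx : x ≠ 0) :
    eval (chartU₂ α₃ α₄ x y z) (fieldU₂Y α₁ α₂ α₃ α₄ α₅) =
      -(rhsY α₁ α₂ α₃ α₄ α₅ x y + I * rhsX α₁ α₂ α₃ α₄ α₅ y z) * x
        - (y + I * x + α₃) * rhsX α₁ α₂ α₃ α₄ α₅ y z := by
  simp only [fieldU₂Y, chartU₂, rhsX, rhsY, map_add, map_sub, map_mul, map_pow, eval_C, eval_X,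
    eval_ofNat, Matrix.cons_val]
  field_simp
  ring_nf
  simp only [I_sq]
  ring

theorem eval_fieldU₂Z (hx : x ≠ 0) :
    eval (chartU₂ α₃ α₄ x y z) (fieldU₂Z α₁ α₂ α₃ α₄ α₅) =
      rhsZ α₁ α₂ α₃ α₄ x y z * x + (z + α₄) * rhsX α₁ α₂ α₃ α₄ α₅ y z := by
  simp only [fieldU₂Z, chartU₂, rhsX, rhsZ, map_add, map_sub, map_mul, map_pow, eval_C, eval_X,
    eval_ofNat, Matrix.cons_val]
  field_simp
  ring_nf
  simp only [I_sq]
  ring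

end MTWI

open MTWI in
theorem stmt13 (α₁ α₂ α₃ α₄ α₅ : ℂ) :
    ∃ P₁ P₂ P₃ : MvPolynomial (Fin 3) ℂ,
      ∀ (U : Set ℂ), IsOpen U → IsConnected U →
      ∀ x y z : ℂ → ℂ, solMTWI α₁ α₂ α₃ α₄ α₅ x y z U → (∀ t ∈ U, x t ≠ 0) →
      ∀ t ∈ U,
        HasDerivAt (fun s => 1 / x s)
          (MvPolynomial.eval ![1 / x t, -(y t + I * x t + α₃) * x t, (z t + α₄) * x t] P₁) t ∧
        HasDerivAt (fun s => -(y s + I * x s + α₃) * x s)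
          (MvPolynomial.eval ![1 / x t, -(y t + I * x t + α₃) * x t, (z t + α₄) * x t] P₂) t ∧
        HasDerivAt (fun s => (z s + α₄) * x s)
          (MvPolynomial.eval ![1 / x t, -(y t + I * x t + α₃) * x t, (z t + α₄) * x t] P₃) t := by
  refine ⟨fieldU₂X α₁ α₂ α₃ α₄ α₅, fieldU₂Y α₁ α₂ α₃ α₄ α₅, fieldU₂Z α₁ α₂ α₃ α₄ α₅,
    fun U _ _ x y z hsol hx₀ t ht => ?_⟩
  obtain ⟨hx, hy, hz⟩ := hsol t ht
  have h₀ : x t ≠ 0 := hx₀ t ht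
  exact ⟨(hasDerivAt_one_div hx h₀).congr_deriv (eval_fieldU₂X α₁ α₂ α₃ α₄ α₅ h₀).symm,
    (hasDerivAt_chartU₂_y α₃ hx hy).congr_deriv (eval_fieldU₂Y α₁ α₂ α₃ α₄ α₅ h₀).symm,
    (hasDerivAt_chartU₂_z α₄ hx hz).congr_deriv (eval_fieldU₂Z α₁ α₂ α₃ α₄ α₅ h₀).symm⟩
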